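/- arXiv:2007.13589 — 3 statements merged into one kernel-verified Lean document; each statement's English description precedes it below -/
import Mathlib

section
/- Let c be a real number and let λ, λ₂, λ₃, λ₄, ω₂, ω₃, ω₄ : I → ℝ be twice differentiable functions on an open interval I satisfying λ₂ + λ₃ + λ₄ = -3λ, λᵢ' = (λᵢ - λ) ωᵢ, and ωᵢ' = ωᵢ² + λ λᵢ + c for i = 2,3,4. Then with T = ω₂ + ω₃ + ω₄, one has ω₂³ + ω₃³ + ω₄³ = (1/2) T'' - (λ² + c) T + 6 λ λ' on I. -/
/-!
Write `T = ω₂ + ω₃ + ω₄`. Since `∑ λᵢ = -3λ`, the structure equations give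
`T' = ∑ ωᵢ² - 3λ² + 3c` and `λ' = -⅓ ∑ (λᵢ - λ) ωᵢ`, i.e. `∑ λᵢ ωᵢ = λT - 3λ'`.
Differentiating `T'` once more, `T'' = 2 f₃ + 2λ ∑ λᵢ ωᵢ + 2cT - 6λλ' = 2 f₃ + 2(λ² + c)T - 12λλ'`.
-/

open Filter Topology

theorem deriv_deriv_eq_of_hasDerivAt {𝕜 F : Type*} [NontriviallyNormedField 𝕜]
    [NormedAddCommGroup F] [NormedSpace 𝕜 F] {f g : 𝕜 → F} {s : Set 𝕜} {x : 𝕜} {g' : F}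
    (hs : s ∈ 𝓝 x) (hf : ∀ y ∈ s, HasDerivAt f (g y) y) (hg : HasDerivAt g g' x) :
    deriv (deriv f) x = g' := by
  have hfg : deriv f =ᶠ[𝓝 x] g := eventually_of_mem hs fun y hy => (hf y hy).deriv
  rw [hfg.deriv_eq, hg.deriv]

theorem hasDerivAt_of_sum_eq_neg_three_mul {I : Set ℝ} (hI : IsOpen I)
    {lam l2 l3 l4 w2 w3 w4 : ℝ → ℝ} {t : ℝ} (ht : t ∈ I)
    (hsum : ∀ t ∈ I, l2 t + l3 t + l4 t = -3 * lam t)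
    (hdl2 : ∀ t ∈ I, HasDerivAt l2 ((l2 t - lam t) * w2 t) t)
    (hdl3 : ∀ t ∈ I, HasDerivAt l3 ((l3 t - lam t) * w3 t) t)
    (hdl4 : ∀ t ∈ I, HasDerivAt l4 ((l4 t - lam t) * w4 t) t) :
    HasDerivAt lam
      (-(1 / 3) * ((l2 t - lam t) * w2 t + (l3 t - lam t) * w3 t + (l4 t - lam t) * w4 t)) t := by
  have hsum' : HasDerivAt (fun s => -(1 / 3) * (l2 s + l3 s + l4 s)) _ t :=
    (((hdl2 t ht).add (hdl3 t ht)).add (hdl4 t ht)).const_mul _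
  refine hsum'.congr_of_eventuallyEq ?_
  filter_upwards [hI.mem_nhds ht] with s hs
  linarith [hsum s hs]

theorem hasDerivAt_sum_of_riccati {c : ℝ} {I : Set ℝ} {lam l2 l3 l4 w2 w3 w4 : ℝ → ℝ}
    {t : ℝ} (ht : t ∈ I)
    (hsum : ∀ t ∈ I, l2 t + l3 t + l4 t = -3 * lam t)
    (hw2 : ∀ t ∈ I, HasDerivAt w2 ((w2 t) ^ 2 + lam t * l2 t + c) t)
    (hw3 : ∀ t ∈ I, HasDerivAt w3 ((w3 t) ^ 2 + lam t * l3 t + c) t)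
    (hw4 : ∀ t ∈ I, HasDerivAt w4 ((w4 t) ^ 2 + lam t * l4 t + c) t) :
    HasDerivAt (fun s => w2 s + w3 s + w4 s)
      (w2 t ^ 2 + w3 t ^ 2 + w4 t ^ 2 - 3 * lam t ^ 2 + 3 * c) t := by
  refine (((hw2 t ht).add (hw3 t ht)).add (hw4 t ht)).congr_deriv ?_
  linear_combination lam t * hsum t ht

theorem f3_formula_general (c : ℝ) (I : Set ℝ) (hI : IsOpen I)
    (lam l2 l3 l4 w2 w3 w4 : ℝ → ℝ)
    (hsum : ∀ t ∈ I, l2 t + l3 t + l4 t = -3 * lam t)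
    (hdl2 : ∀ t ∈ I, HasDerivAt l2 ((l2 t - lam t) * w2 t) t)
    (hdl3 : ∀ t ∈ I, HasDerivAt l3 ((l3 t - lam t) * w3 t) t)
    (hdl4 : ∀ t ∈ I, HasDerivAt l4 ((l4 t - lam t) * w4 t) t)
    (hw2 : ∀ t ∈ I, HasDerivAt w2 ((w2 t) ^ 2 + lam t * l2 t + c) t)
    (hw3 : ∀ t ∈ I, HasDerivAt w3 ((w3 t) ^ 2 + lam t * l3 t + c) t)
    (hw4 : ∀ t ∈ I, HasDerivAt w4 ((w4 t) ^ 2 + lam t * l4 t + c) t) :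
    ∀ t ∈ I, (w2 t) ^ 3 + (w3 t) ^ 3 + (w4 t) ^ 3
      = (1 / 2) * deriv (deriv (fun s => w2 s + w3 s + w4 s)) t
        - ((lam t) ^ 2 + c) * (w2 t + w3 t + w4 t)
        + 6 * lam t * deriv lam t := by
  intro t ht
  have hlam := hasDerivAt_of_sum_eq_neg_three_mul hI ht hsum hdl2 hdl3 hdl4
  have hT' : HasDerivAt (fun s => w2 s ^ 2 + w3 s ^ 2 + w4 s ^ 2 - 3 * lam s ^ 2 + 3 * c) _ t :=
    (((((hw2 t ht).pow 2).add ((hw3 t ht).pow 2)).add ((hw4 t ht).pow 2)).sub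
      ((hlam.pow 2).const_mul 3)).add_const _
  rw [deriv_deriv_eq_of_hasDerivAt (hI.mem_nhds ht)
    (fun s hs => hasDerivAt_sum_of_riccati hs hsum hw2 hw3 hw4) hT', hlam.deriv]
  ring

theorem f3_formula (c : ℝ) (I : Set ℝ) (hI : IsOpen I)
    (lam l2 l3 l4 w2 w3 w4 : ℝ → ℝ)
    (hlam : ContDiffOn ℝ 2 lam I)
    (hl2 : ContDiffOn ℝ 2 l2 I) (hl3 : ContDiffOn ℝ 2 l3 I) (hl4 : ContDiffOn ℝ 2 l4 I)
    (hw2' : ContDiffOn ℝ 2 w2 I) (hw3' : ContDiffOn ℝ 2 w3 I) (hw4' : ContDiffOn ℝ 2 w4 I)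
    (hsum : ∀ t ∈ I, l2 t + l3 t + l4 t = -3 * lam t)
    (hdl2 : ∀ t ∈ I, HasDerivAt l2 ((l2 t - lam t) * w2 t) t)
    (hdl3 : ∀ t ∈ I, HasDerivAt l3 ((l3 t - lam t) * w3 t) t)
    (hdl4 : ∀ t ∈ I, HasDerivAt l4 ((l4 t - lam t) * w4 t) t)
    (hw2 : ∀ t ∈ I, HasDerivAt w2 ((w2 t) ^ 2 + lam t * l2 t + c) t)
    (hw3 : ∀ t ∈ I, HasDerivAt w3 ((w3 t) ^ 2 + lam t * l3 t + c) t)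
    (hw4 : ∀ t ∈ I, HasDerivAt w4 ((w4 t) ^ 2 + lam t * l4 t + c) t) :
    ∀ t ∈ I, (w2 t) ^ 3 + (w3 t) ^ 3 + (w4 t) ^ 3
      = (1 / 2) * deriv (deriv (fun s => w2 s + w3 s + w4 s)) t
        - ((lam t) ^ 2 + c) * (w2 t + w3 t + w4 t)
        + 6 * lam t * deriv lam t :=
  f3_formula_general c I hI lam l2 l3 l4 w2 w3 w4 hsum hdl2 hdl3 hdl4 hw2 hw3 hw4
end

section
/- Let c be a real number and let κ, τ, λ₂, λ₃, λ₄ : I → ℝ be differentiable functions on an open interval I such that λ₂(t), λ₃(t), λ₄(t) are pairwise distinct for every t. Set λ = -(λ₂+λ₃+λ₄)/3 and ωᵢ = κλᵢ + τ. If for each i = 2,3,4 one has λᵢ' = (λᵢ - λ)ωᵢ and (κλᵢ + τ)' = (κλᵢ + τ)² + λλᵢ + c on I, then κ' = -(1/3)(1 + κ²)(λ₂+λ₃+λ₄) + κτ and τ' = c - (1/3)κτ(λ₂+λ₃+λ₄) + τ² on I. -/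
/-!
Differentiating `ωᵢ = κ λᵢ + τ` by the product rule and comparing with the structure equation,
the terms quadratic in `λᵢ` cancel and what remains is the relation
`(κ' - κτ - λ(1 + κ²)) λᵢ + (τ' - τ² - λκτ - c) = 0`, affine in `λᵢ`.
It holds for the two distinct values `λ₂ ≠ λ₃`, so both coefficients vanish.
-/

theorem coeffs_eq_zero_of_affine_two_roots {R : Type*} [CommRing R] [NoZeroDivisors R]
    {a b x y : R} (hxy : x ≠ y) (hx : a * x + b = 0) (hy : a * y + b = 0) :
    a = 0 ∧ b = 0 := by
  have ha : a = 0 := by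
    have hmul : a * (x - y) = 0 := by linear_combination hx - hy
    exact (mul_eq_zero.1 hmul).resolve_right (sub_ne_zero.2 hxy)
  exact ⟨ha, by simpa [ha] using hx⟩

theorem affine_relation_of_hasDerivAt {κ τ l : ℝ → ℝ} {κ' τ' lam c t : ℝ}
    (hκ : HasDerivAt κ κ' t) (hτ : HasDerivAt τ τ' t)
    (hl : HasDerivAt l ((l t - lam) * (κ t * l t + τ t)) t)
    (hω : HasDerivAt (fun s => κ s * l s + τ s) ((κ t * l t + τ t) ^ 2 + lam * l t + c) t) :
    (κ' - κ t * τ t - lam * (1 + κ t ^ 2)) * l t + (τ' - τ t ^ 2 - lam * κ t * τ t - c) = 0 := by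
  have hprod := ((hκ.mul hl).add hτ).unique hω
  linear_combination hprod

theorem kappa_tau_derivatives_general (c : ℝ) (I : Set ℝ) (hI : IsOpen I)
    (κ τ l2 l3 l4 : ℝ → ℝ)
    (hκ : DifferentiableOn ℝ κ I) (hτ : DifferentiableOn ℝ τ I)
    (hdist : ∀ t ∈ I, l2 t ≠ l3 t ∧ l2 t ≠ l4 t ∧ l3 t ≠ l4 t)
    (lam : ℝ → ℝ) (hlam : ∀ t, lam t = -(l2 t + l3 t + l4 t) / 3)
    (hdl2 : ∀ t ∈ I, HasDerivAt l2 ((l2 t - lam t) * (κ t * l2 t + τ t)) t)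
    (hdl3 : ∀ t ∈ I, HasDerivAt l3 ((l3 t - lam t) * (κ t * l3 t + τ t)) t)
    (hw2 : ∀ t ∈ I, HasDerivAt (fun s => κ s * l2 s + τ s)
      ((κ t * l2 t + τ t) ^ 2 + lam t * l2 t + c) t)
    (hw3 : ∀ t ∈ I, HasDerivAt (fun s => κ s * l3 s + τ s)
      ((κ t * l3 t + τ t) ^ 2 + lam t * l3 t + c) t) :
    ∀ t ∈ I,
      deriv κ t = -(1 / 3) * (1 + (κ t) ^ 2) * (l2 t + l3 t + l4 t) + κ t * τ t ∧
      deriv τ t = c - (1 / 3) * κ t * τ t * (l2 t + l3 t + l4 t) + (τ t) ^ 2 := by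
  intro t ht
  have hκ' := (hκ.differentiableAt (hI.mem_nhds ht)).hasDerivAt
  have hτ' := (hτ.differentiableAt (hI.mem_nhds ht)).hasDerivAt
  obtain ⟨hκ_eq, hτ_eq⟩ := coeffs_eq_zero_of_affine_two_roots (hdist t ht).1
    (affine_relation_of_hasDerivAt hκ' hτ' (hdl2 t ht) (hw2 t ht))
    (affine_relation_of_hasDerivAt hκ' hτ' (hdl3 t ht) (hw3 t ht))
  rw [hlam t] at hκ_eq hτ_eq
  exact ⟨by linear_combination hκ_eq, by linear_combination hτ_eq⟩

theorem kappa_tau_derivatives (c : ℝ) (I : Set ℝ) (hI : IsOpen I)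
    (κ τ l2 l3 l4 : ℝ → ℝ)
    (hκ : DifferentiableOn ℝ κ I) (hτ : DifferentiableOn ℝ τ I)
    (hdist : ∀ t ∈ I, l2 t ≠ l3 t ∧ l2 t ≠ l4 t ∧ l3 t ≠ l4 t)
    (lam : ℝ → ℝ) (hlam : ∀ t, lam t = -(l2 t + l3 t + l4 t) / 3)
    (hdl2 : ∀ t ∈ I, HasDerivAt l2 ((l2 t - lam t) * (κ t * l2 t + τ t)) t)
    (hdl3 : ∀ t ∈ I, HasDerivAt l3 ((l3 t - lam t) * (κ t * l3 t + τ t)) t)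
    (hdl4 : ∀ t ∈ I, HasDerivAt l4 ((l4 t - lam t) * (κ t * l4 t + τ t)) t)
    (hw2 : ∀ t ∈ I, HasDerivAt (fun s => κ s * l2 s + τ s)
      ((κ t * l2 t + τ t) ^ 2 + lam t * l2 t + c) t)
    (hw3 : ∀ t ∈ I, HasDerivAt (fun s => κ s * l3 s + τ s)
      ((κ t * l3 t + τ t) ^ 2 + lam t * l3 t + c) t)
    (hw4 : ∀ t ∈ I, HasDerivAt (fun s => κ s * l4 s + τ s)
      ((κ t * l4 t + τ t) ^ 2 + lam t * l4 t + c) t) :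
    ∀ t ∈ I,
      deriv κ t = -(1 / 3) * (1 + (κ t) ^ 2) * (l2 t + l3 t + l4 t) + κ t * τ t ∧
      deriv τ t = c - (1 / 3) * κ t * τ t * (l2 t + l3 t + l4 t) + (τ t) ^ 2 :=
  kappa_tau_derivatives_general c I hI κ τ l2 l3 l4 hκ hτ hdist lam hlam hdl2 hdl3 hw2 hw3
end

section
/- Let c be a real number and λ : I → ℝ a four times differentiable function on an open interval I with λ(t) ≠ 0 and λ'(t) ≠ 0 for all t ∈ I. Then λ cannot satisfy both 62λλ'' - 109(λ')² + 192λ⁴ - 48cλ² = 0 and 44λ²λ''' - 124λλ'λ'' + 550λ⁴λ' + 18(λ')³ - 142cλ²λ' = 0 on all of I. -/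
/-!
Differentiating `a₁ = 0` and eliminating `λ'''` with `a₂ = 0` leaves `λ'` times a relation in
`λ, λ', λ''`; combined with `a₁` it becomes the `λ''`-free relation
`b := 2578 λ'² - 22163 λ⁴ + 40439 c λ² = 0`. Differentiating `b` and eliminating `λ''` and `λ'`
with `a₁` and `b` gives `λ² (827421 λ² + 1776889 c) = 0`, so `λ²` is constant on `I`, and then
`λ λ' = 0`, contradicting `λ, λ' ≠ 0`.
-/

open Set

theorem IsOpen.eqOn_zero_of_hasDerivAt {𝕜 F : Type*} [NontriviallyNormedField 𝕜]
    [NormedAddCommGroup F] [NormedSpace 𝕜 F] {I : Set 𝕜} {f f' : 𝕜 → F} (hI : IsOpen I)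
    (hf : ∀ t ∈ I, HasDerivAt f (f' t) t) (h : EqOn f 0 I) : EqOn f' 0 I := fun t ht =>
  ((hf t ht).congr_of_eventuallyEq (Filter.mem_of_superset (hI.mem_nhds ht)
    fun _ hs => (h hs).symm)).unique (hasDerivAt_const t 0)

namespace Lemma34

def a₁ (c x x₁ x₂ : ℝ) : ℝ :=
  62 * x * x₂ - 109 * x₁ ^ 2 + 192 * x ^ 4 - 48 * c * x ^ 2

def a₂ (c x x₁ x₂ x₃ : ℝ) : ℝ :=
  44 * x ^ 2 * x₃ - 124 * x * x₁ * x₂ + 550 * x ^ 4 * x₁ + 18 * x₁ ^ 3 - 142 * c * x ^ 2 * x₁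

def b (c x x₁ : ℝ) : ℝ :=
  2578 * x₁ ^ 2 - 22163 * x ^ 4 + 40439 * c * x ^ 2

variable {c x x₁ x₂ x₃ : ℝ}

theorem b_eq_zero (hx₁ : x₁ ≠ 0) (h₁ : a₁ c x x₁ x₂ = 0) (h₂ : a₂ c x x₁ x₂ x₃ = 0)
    (h₁' : 62 * x₁ * x₂ + 62 * x * x₃ - 218 * x₁ * x₂ + 768 * x ^ 3 * x₁ - 96 * c * x * x₁ = 0) :
    b c x x₁ = 0 := by
  unfold a₁ a₂ at *
  have h : 824 * x * x₂ - 308 * x ^ 4 - 1116 * x₁ ^ 2 + 4580 * c * x ^ 2 = 0 := by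
    refine (mul_eq_zero.mp ?_).resolve_left hx₁
    linear_combination 44 * x * h₁' - 62 * h₂
  unfold b
  linear_combination (31 / 4 : ℝ) * h - 103 * h₁

theorem sq_relation (hx : x ≠ 0) (hx₁ : x₁ ≠ 0) (h₁ : a₁ c x x₁ x₂ = 0) (hb : b c x x₁ = 0)
    (hb' : 5156 * x₁ * x₂ - 88652 * x ^ 3 * x₁ + 80878 * c * x * x₁ = 0) :
    827421 * x ^ 2 + 1776889 * c = 0 := by
  unfold a₁ b at *
  have h : 5156 * x * x₂ - 88652 * x ^ 4 + 80878 * c * x ^ 2 = 0 := by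
    refine (mul_eq_zero.mp ?_).resolve_left hx₁
    linear_combination x * hb'
  refine (mul_eq_zero.mp ?_).resolve_left (pow_ne_zero 2 hx)
  linear_combination (140501 / 1289 : ℝ) * hb - 31 * h + 2578 * h₁

variable {u v w : ℝ → ℝ} {w' t : ℝ}

theorem hasDerivAt_a₁ (c : ℝ) (hu : HasDerivAt u (v t) t) (hv : HasDerivAt v (w t) t)
    (hw : HasDerivAt w w' t) :
    HasDerivAt (fun s => a₁ c (u s) (v s) (w s))
      (62 * v t * w t + 62 * u t * w' - 218 * v t * w t + 768 * u t ^ 3 * v t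
        - 96 * c * u t * v t) t := by
  refine (((((hu.const_mul 62).mul hw).sub ((hv.pow 2).const_mul 109)).add
    ((hu.pow 4).const_mul 192)).sub ((hu.pow 2).const_mul (48 * c))).congr_deriv ?_
  push_cast
  ring

theorem hasDerivAt_b (c : ℝ) (hu : HasDerivAt u (v t) t) (hv : HasDerivAt v (w t) t) :
    HasDerivAt (fun s => b c (u s) (v s))
      (5156 * v t * w t - 88652 * u t ^ 3 * v t + 80878 * c * u t * v t) t := by
  refine ((((hv.pow 2).const_mul 2578).sub ((hu.pow 4).const_mul 22163)).add
    ((hu.pow 2).const_mul (40439 * c))).congr_deriv ?_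
  push_cast
  ring

end Lemma34

open Lemma34 in
theorem lemma34_case_ii (c : ℝ) (I : Set ℝ) (hI : IsOpen I) (hne : I.Nonempty)
    (lam : ℝ → ℝ) (hsm : ContDiffOn ℝ 4 lam I)
    (hlam : ∀ t ∈ I, lam t ≠ 0) (hlam' : ∀ t ∈ I, deriv lam t ≠ 0) :
    ¬ ((∀ t ∈ I,
        62 * lam t * deriv (deriv lam) t - 109 * (deriv lam t) ^ 2
          + 192 * (lam t) ^ 4 - 48 * c * (lam t) ^ 2 = 0) ∧
      (∀ t ∈ I,
        44 * (lam t) ^ 2 * deriv (deriv (deriv lam)) t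
          - 124 * lam t * deriv lam t * deriv (deriv lam) t
          + 550 * (lam t) ^ 4 * deriv lam t + 18 * (deriv lam t) ^ 3
          - 142 * c * (lam t) ^ 2 * deriv lam t = 0)) := by
  rintro ⟨ha₁, ha₂⟩
  have hd₁ : ContDiffOn ℝ 3 (deriv lam) I := hsm.deriv_of_isOpen hI (by norm_num)
  have hd₂ : ContDiffOn ℝ 2 (deriv (deriv lam)) I := hd₁.deriv_of_isOpen hI (by norm_num)
  have hu : ∀ t ∈ I, HasDerivAt lam (deriv lam t) t := fun t ht =>
    (hsm.differentiableOn (by norm_num)).hasDerivAt (hI.mem_nhds ht)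
  have hv : ∀ t ∈ I, HasDerivAt (deriv lam) (deriv (deriv lam) t) t := fun t ht =>
    (hd₁.differentiableOn (by norm_num)).hasDerivAt (hI.mem_nhds ht)
  have hw : ∀ t ∈ I, HasDerivAt (deriv (deriv lam)) (deriv (deriv (deriv lam)) t) t :=
    fun t ht => (hd₂.differentiableOn (by norm_num)).hasDerivAt (hI.mem_nhds ht)
  have ha₁' := hI.eqOn_zero_of_hasDerivAt
    (fun t ht => hasDerivAt_a₁ c (hu t ht) (hv t ht) (hw t ht)) ha₁
  have hb : EqOn (fun t => b c (lam t) (deriv lam t)) 0 I := fun t ht =>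
    b_eq_zero (hlam' t ht) (ha₁ t ht) (ha₂ t ht) (ha₁' ht)
  have hb' := hI.eqOn_zero_of_hasDerivAt (fun t ht => hasDerivAt_b c (hu t ht) (hv t ht)) hb
  have hsq : EqOn (fun t => 827421 * lam t ^ 2 + 1776889 * c) 0 I := fun t ht =>
    sq_relation (hlam t ht) (hlam' t ht) (ha₁ t ht) (hb ht) (hb' ht)
  obtain ⟨t, ht⟩ := hne
  have h := hI.eqOn_zero_of_hasDerivAt
    (fun t ht => (((hu t ht).pow 2).const_mul 827421).add_const (1776889 * c)) hsq ht
  simp [hlam t ht, hlam' t ht] at h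
end
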